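/- There exists a group that is simultaneously countable, infinite, torsion-free, and simple. -/

import Mathlib

/-!
Start from `ℤ` and, at step `n`, take an HNN extension making one pair of nonidentity elements
conjugate; the pairs are scheduled by Cantor pairing so that every pair of elements of the union
is handled at some step. In the union all nonidentity elements are conjugate, so it is simple.

HNN extensions of torsion-free groups are torsion-free: by cyclic reduction every element is
conjugate into the base group or to a nonempty cyclically reduced word, whose powers are again
nonempty reduced words and hence, by Britton's lemma, never trivial.
-/

/-- A monoid is torsion-free if no element other than `1` has finite order
(the definition `Monoid.IsTorsionFree` of the older Mathlib, since removed). -/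
def Monoid.IsTorsionFree (G : Type*) [Monoid G] : Prop :=
  ∀ g : G, g ≠ 1 → ¬IsOfFinOrder g

open Function

theorem isSimpleGroup_of_isConj {G : Type*} [Group G] [Nontrivial G]
    (h : ∀ x y : G, x ≠ 1 → y ≠ 1 → IsConj x y) : IsSimpleGroup G where
  eq_bot_or_eq_top_of_normal H hH := by
    refine (H.bot_or_exists_ne_one).imp_right fun ⟨x, hxH, hx⟩ => eq_top_iff.2 fun y _ => ?_
    rcases eq_or_ne y 1 with rfl | hy
    · exact H.one_mem
    obtain ⟨c, rfl⟩ := isConj_iff.1 (h x y hx hy)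
    exact hH.conj_mem x hxH c

theorem exists_mulEquiv_zpowers_apply_eq {G : Type*} [Group G] {a b : G}
    (ha : ¬IsOfFinOrder a) (hb : ¬IsOfFinOrder b) :
    ∃ ψ : Subgroup.zpowers a ≃* Subgroup.zpowers b,
      (ψ ⟨a, Subgroup.mem_zpowers a⟩ : G) = b := by
  have exists_ofAdd_one (c : G) (hc : ¬IsOfFinOrder c) :
      ∃ e : Multiplicative ℤ ≃* Subgroup.zpowers c,
        e (Multiplicative.ofAdd 1) = ⟨c, Subgroup.mem_zpowers c⟩ := by
    have hinj : Injective (zpowersHom G c) :=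
      (injective_zpow_iff_not_isOfFinOrder.2 hc).comp Multiplicative.toAdd.injective
    exact ⟨(MonoidHom.ofInjective hinj).trans
      (MulEquiv.subgroupCongr (Subgroup.range_zpowersHom c)),
      Subtype.ext (by simp [MonoidHom.ofInjective_apply])⟩
  obtain ⟨ea, hea⟩ := exists_ofAdd_one a ha
  obtain ⟨eb, heb⟩ := exists_ofAdd_one b hb
  exact ⟨ea.symm.trans eb,
    by rw [MulEquiv.trans_apply, ← hea, MulEquiv.symm_apply_apply, heb]⟩

namespace HNNExtension

open NormalWord

variable {G : Type*} [Group G] {A B : Subgroup G} {φ : A ≃* B}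

variable (A B) in
/-- The relation between consecutive letters of a `ReducedWord`: no subword `t^u g t^(-u)`
with `g ∈ toSubgroup A B u`. -/
def NoPinch (p q : ℤˣ × G) : Prop :=
  p.2 ∈ toSubgroup A B p.1 → p.1 = q.1

variable (A B) in
def IsCyclicallyReduced (L : List (ℤˣ × G)) : Prop :=
  L.IsChain (NoPinch A B) ∧ ∀ p ∈ L.getLast?, ∀ q ∈ L.head?, NoPinch A B p q

variable (φ) in
def lettersProd (L : List (ℤˣ × G)) : HNNExtension G A B φ :=
  (L.map fun x => t ^ (x.1 : ℤ) * of x.2).prod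

@[simp]
theorem lettersProd_nil : lettersProd φ ([] : List (ℤˣ × G)) = 1 := rfl

@[simp]
theorem lettersProd_cons (p : ℤˣ × G) (L : List (ℤˣ × G)) :
    lettersProd φ (p :: L) = t ^ (p.1 : ℤ) * of p.2 * lettersProd φ L := rfl

@[simp]
theorem lettersProd_append (L M : List (ℤˣ × G)) :
    lettersProd φ (L ++ M) = lettersProd φ L * lettersProd φ M := by
  simp [lettersProd]

theorem exists_of_mul_lettersProd_eq (x : HNNExtension G A B φ) :
    ∃ (g : G) (L : List (ℤˣ × G)),
      L.IsChain (NoPinch A B) ∧ of g * lettersProd φ L = x := by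
  obtain ⟨d⟩ := TransversalPair.nonempty G A B
  let w := x • (empty : NormalWord d)
  exact ⟨w.head, w.toList, w.chain,
    (prod_smul φ x _).trans (by rw [prod_empty, mul_one])⟩

instance [Countable G] : Countable (HNNExtension G A B φ) :=
  Surjective.countable (f := fun p : G × List (ℤˣ × G) => of p.1 * lettersProd φ p.2)
    fun x => let ⟨g, L, _, h⟩ := exists_of_mul_lettersProd_eq x; ⟨(g, L), h⟩

theorem eq_nil_of_lettersProd_mem_range {L : List (ℤˣ × G)} (hL : L.IsChain (NoPinch A B))
    (h : lettersProd φ L ∈ of.range) : L = [] :=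
  ReducedWord.toList_eq_nil_of_mem_of_range φ ⟨1, L, hL⟩
    (by simpa [ReducedWord.prod, lettersProd] using h)

theorem IsCyclicallyReduced.isChain_flatten_replicate {L : List (ℤˣ × G)}
    (hL : IsCyclicallyReduced A B L) (hne : L ≠ []) (n : ℕ) :
    (List.replicate n L).flatten.IsChain (NoPinch A B) :=
  (List.isChain_flatten (by simp [List.mem_replicate, hne.symm])).2
    ⟨fun _ hl => List.eq_of_mem_replicate hl ▸ hL.1, List.isChain_replicate_of_rel n hL.2⟩

theorem lettersProd_pow_ne_one {L : List (ℤˣ × G)} (hL : IsCyclicallyReduced A B L)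
    (hne : L ≠ []) {n : ℕ} (hn : n ≠ 0) : lettersProd φ L ^ n ≠ 1 := by
  intro h
  have hpow : lettersProd φ (List.replicate n L).flatten = lettersProd φ L ^ n := by
    simp [lettersProd, List.map_flatten, List.prod_flatten, List.map_replicate]
  have := eq_nil_of_lettersProd_mem_range (φ := φ) (hL.isChain_flatten_replicate hne n)
    (by rw [hpow, h]; exact one_mem _)
  simp [hn, hne] at this

theorem t_zpow_mul_of (u : ℤˣ) (a : toSubgroup A B u) :
    (t ^ (u : ℤ) * of (a : G) : HNNExtension G A B φ) =
      of (toSubgroupEquiv φ u a : G) * t ^ (u : ℤ) := by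
  rcases Int.units_eq_one_or u with rfl | rfl
  · simp only [Units.val_one, zpow_one]
    exact t_mul_of a
  · simp only [Units.val_neg, Units.val_one, zpow_neg, zpow_one]
    exact inv_t_mul_of a

theorem exists_isConj_of_or_isCyclicallyReduced (g : G) (L : List (ℤˣ × G))
    (hL : L.IsChain (NoPinch A B)) :
    (∃ h : G, IsConj (of g * lettersProd φ L) (of h)) ∨
      ∃ L' ≠ [], IsCyclicallyReduced A B L' ∧
        IsConj (of g * lettersProd φ L) (lettersProd φ L') := by
  induction hn : L.length using Nat.strong_induction_on generalizing g L with | _ n ih =>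
  rcases L.eq_nil_or_concat' with rfl | ⟨M, ⟨u, a⟩, rfl⟩
  · exact Or.inl ⟨g, by rw [lettersProd_nil, mul_one]⟩
  have hconj : IsConj (of g * lettersProd φ (M ++ [(u, a)]))
      (lettersProd φ (M ++ [(u, a * g)])) :=
    isConj_iff.2 ⟨of g⁻¹, by simp [mul_assoc]⟩
  have hL' : (M ++ [(u, a * g)]).IsChain (NoPinch A B) := by
    rw [List.isChain_append] at hL ⊢
    refine ⟨hL.1, List.isChain_singleton _, fun x hx y hy => ?_⟩
    obtain rfl : (u, a * g) = y := by simpa using hy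
    exact hL.2.2 x hx (u, a) rfl
  by_cases hcyc : IsCyclicallyReduced A B (M ++ [(u, a * g)])
  · exact Or.inr ⟨_, by simp, hcyc, hconj⟩
  rcases M with _ | ⟨⟨u₁, g₁⟩, M'⟩
  · exact absurd ⟨List.isChain_singleton _, by simp [NoPinch]⟩ hcyc
  -- the last letter `t^u (a g)` pinches against the first one `t^u₁ g₁`, so rotating the
  -- word shortens it
  have hlast : ¬NoPinch A B (u, a * g) (u₁, g₁) := fun h => hcyc ⟨hL', fun p hp q hq => by
    rw [List.getLast?_concat, Option.mem_some_iff] at hp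
    rw [List.cons_append, List.head?_cons, Option.mem_some_iff] at hq
    exact hp ▸ hq ▸ h⟩
  obtain ⟨hmem, hne⟩ : a * g ∈ toSubgroup A B u ∧ u ≠ u₁ := by
    simpa only [NoPinch, Classical.not_imp] using hlast
  have hu₁ : u₁ = -u := by
    rcases Int.units_eq_one_or u with rfl | rfl <;>
      rcases Int.units_eq_one_or u₁ with rfl | rfl <;> simp_all
  set c : G := (toSubgroupEquiv φ u ⟨a * g, hmem⟩ : G)
  have hrel : (t ^ (u : ℤ) * of (a * g) : HNNExtension G A B φ) = of c * t ^ (u : ℤ) :=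
    t_zpow_mul_of u ⟨a * g, hmem⟩
  have hrot : IsConj (lettersProd φ ((u₁, g₁) :: M' ++ [(u, a * g)]))
      (of g₁ * lettersProd φ M' * of c) := by
    refine isConj_iff.2 ⟨t ^ (u : ℤ), ?_⟩
    simp only [List.cons_append, lettersProd_cons, lettersProd_append, lettersProd_nil, mul_one,
      hu₁, Units.val_neg, zpow_neg, mul_assoc, hrel]
    group
  have hsplit : IsConj (of g₁ * lettersProd φ M' * of c) (of (c * g₁) * lettersProd φ M') :=
    isConj_iff.2 ⟨of c, by simp [mul_assoc]⟩
  have hM' : M'.IsChain (NoPinch A B) :=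
    (List.isChain_cons.1 (List.isChain_append.1 hL).1).2
  exact (ih M'.length (by simp [← hn]) (c * g₁) M' hM' rfl).imp
    (fun ⟨h, hh⟩ => ⟨h, (hconj.trans hrot).trans (hsplit.trans hh)⟩)
    (fun ⟨L', hne, hcyc, hh⟩ => ⟨L', hne, hcyc, (hconj.trans hrot).trans (hsplit.trans hh)⟩)

theorem isTorsionFree (hG : Monoid.IsTorsionFree G) :
    Monoid.IsTorsionFree (HNNExtension G A B φ) := by
  intro x hx hfin
  obtain ⟨g, L, hL, rfl⟩ := exists_of_mul_lettersProd_eq x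
  rcases exists_isConj_of_or_isCyclicallyReduced g L hL with
    ⟨h, hconj⟩ | ⟨L, hne, hcyc, hconj⟩
  · have h1 : h = 1 := by
      by_contra h1
      exact hG h h1 ((of_injective φ).isOfFinOrder_iff.1 (hconj.isOfFinOrder hfin))
    rw [h1, map_one] at hconj
    exact hx (isConj_one_right.1 hconj.symm)
  · obtain ⟨n, hn, hpow⟩ := (hconj.isOfFinOrder hfin).exists_pow_eq_one
    exact lettersProd_pow_ne_one hcyc hne hn.ne' hpow

end HNNExtension

namespace MonoidHom

variable {X : ℕ → Type*} [∀ n, Group (X n)] (f : ∀ n, X n →* X (n + 1))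

def natLERec (m n : ℕ) (h : m ≤ n) : X m →* X n where
  toFun := Nat.leRecOn h (fun {k} => f k)
  map_one' := by
    induction n, h using Nat.le_induction with
    | base => exact Nat.leRecOn_self _
    | succ n hmn ih => rw [Nat.leRecOn_succ hmn, ih, map_one]
  map_mul' x y := by
    induction n, h using Nat.le_induction with
    | base => simp only [Nat.leRecOn_self]
    | succ n hmn ih => simp only [Nat.leRecOn_succ hmn, ih, map_mul]

instance : DirectedSystem X (natLERec f · · ·) where
  map_self _ _ := Nat.leRecOn_self _
  map_map _ _ _ hij hjk _ := (Nat.leRecOn_trans hij hjk _).symm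

end MonoidHom

abbrev SeqLimit {X : ℕ → Type*} [∀ n, Group (X n)] (f : ∀ n, X n →* X (n + 1)) : Type _ :=
  DirectLimit X (MonoidHom.natLERec f)

namespace SeqLimit

variable {X : ℕ → Type*} [∀ n, Group (X n)] (f : ∀ n, X n →* X (n + 1))

noncomputable def of (n : ℕ) : X n →* SeqLimit f where
  toFun x := ⟦⟨n, x⟩⟧
  map_one' := (DirectLimit.one_def n).symm
  map_mul' x y := (DirectLimit.mul_def n x y).symm

theorem of_succ {n : ℕ} (x : X n) : of f (n + 1) (f n x) = of f n x := by
  have := DirectLimit.mk_apply (f := MonoidHom.natLERec f) n (n + 1) x n.le_succ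
  rwa [MonoidHom.natLERec, MonoidHom.coe_mk, OneHom.coe_mk, Nat.leRecOn_succ'] at this

theorem exists_of_eq (z : SeqLimit f) : ∃ n x, of f n x = z := by
  obtain ⟨n, x, rfl⟩ := DirectLimit.exists_eq_mk _ z
  exact ⟨n, x, rfl⟩

theorem of_injective (hf : ∀ n, Injective (f n)) (n : ℕ) : Injective (of f n) :=
  DirectLimit.mk_injective _ (fun _ _ h => Nat.leRecOn_injective h _ hf) n

theorem isTorsionFree (hf : ∀ n, Injective (f n)) (hX : ∀ n, Monoid.IsTorsionFree (X n)) :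
    Monoid.IsTorsionFree (SeqLimit f) := by
  intro z hz hfin
  obtain ⟨n, x, rfl⟩ := exists_of_eq f z
  exact hX n x (by rintro rfl; exact hz (map_one _))
    ((of_injective f hf n).isOfFinOrder_iff.1 hfin)

end SeqLimit

structure CountableTorsionFreeGroup where
  carrier : Type
  [group : Group carrier]
  [countable : Countable carrier]
  isTorsionFree : Monoid.IsTorsionFree carrier

namespace CountableTorsionFreeGroup

instance : CoeSort CountableTorsionFreeGroup Type := ⟨carrier⟩

attribute [instance] group countable

theorem exists_embedding_isConj (G : CountableTorsionFreeGroup) (a b : G) :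
    ∃ (H : CountableTorsionFreeGroup) (f : G →* H),
      Injective f ∧ (a ≠ 1 → b ≠ 1 → IsConj (f a) (f b)) := by
  by_cases hab : a ≠ 1 ∧ b ≠ 1
  · obtain ⟨ψ, hψ⟩ := exists_mulEquiv_zpowers_apply_eq (G.isTorsionFree a hab.1)
      (G.isTorsionFree b hab.2)
    refine ⟨⟨HNNExtension G _ _ ψ, HNNExtension.isTorsionFree G.isTorsionFree⟩,
      HNNExtension.of, HNNExtension.of_injective ψ,
      fun _ _ => isConj_iff.2 ⟨HNNExtension.t, ?_⟩⟩
    have h := HNNExtension.t_mul_of (φ := ψ) ⟨a, Subgroup.mem_zpowers a⟩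
    rw [hψ] at h
    rw [mul_inv_eq_iff_eq_mul]
    exact h
  · exact ⟨G, MonoidHom.id G, injective_id, fun ha hb => absurd ⟨ha, hb⟩ hab⟩

end CountableTorsionFreeGroup

/-- A stage `Gₙ` of the construction. The enumeration is kept stable along the chain:
`enum (Nat.pair m c)` is the image of the `c`-th element of `Gₘ` once `m ≤ n`, and the
passage to `Gₙ₊₁` makes `enum (Nat.unpair n).1` and `enum (Nat.unpair n).2` conjugate. -/
structure Stage where
  group : CountableTorsionFreeGroup
  enum : ℕ → group

namespace Stage

variable (S : Stage) (n : ℕ)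

noncomputable def nextGroup : CountableTorsionFreeGroup :=
  (S.group.exists_embedding_isConj (S.enum n.unpair.1) (S.enum n.unpair.2)).choose

noncomputable def embed : S.group →* S.nextGroup n :=
  (S.group.exists_embedding_isConj (S.enum n.unpair.1) (S.enum n.unpair.2)).choose_spec.choose

theorem embed_injective : Injective (S.embed n) :=
  (S.group.exists_embedding_isConj _ _).choose_spec.choose_spec.1

theorem isConj_embed (h₁ : S.enum n.unpair.1 ≠ 1) (h₂ : S.enum n.unpair.2 ≠ 1) :
    IsConj (S.embed n (S.enum n.unpair.1)) (S.embed n (S.enum n.unpair.2)) :=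
  (S.group.exists_embedding_isConj _ _).choose_spec.choose_spec.2 h₁ h₂

noncomputable def next : Stage where
  group := S.nextGroup n
  enum i := if i.unpair.1 = n + 1 then (exists_surjective_nat (S.nextGroup n)).choose i.unpair.2
    else S.embed n (S.enum i)

theorem next_enum_of_ne {i : ℕ} (hi : i.unpair.1 ≠ n + 1) :
    (S.next n).enum i = S.embed n (S.enum i) :=
  if_neg hi

theorem exists_next_enum_eq (x : S.nextGroup n) :
    ∃ c, (S.next n).enum (Nat.pair (n + 1) c) = x := by
  obtain ⟨c, hc⟩ := (exists_surjective_nat (S.nextGroup n)).choose_spec x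
  exact ⟨c, by simp [next, hc]⟩

end Stage

noncomputable def stage : ℕ → Stage
  | 0 => ⟨⟨Multiplicative ℤ, fun _ => not_isOfFinOrder_of_isMulTorsionFree⟩,
      fun i => (exists_surjective_nat (Multiplicative ℤ)).choose i.unpair.2⟩
  | n + 1 => (stage n).next n

theorem exists_stage_enum_eq (n : ℕ) (x : (stage n).group) :
    ∃ c, (stage n).enum (Nat.pair n c) = x := by
  cases n with
  | zero =>
    obtain ⟨c, hc⟩ := (exists_surjective_nat (Multiplicative ℤ)).choose_spec x
    exact ⟨c, by simp only [stage, Nat.unpair_pair]; exact hc⟩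
  | succ n => exact (stage n).exists_next_enum_eq n x

noncomputable def stageEmbed (n : ℕ) : (stage n).group →* (stage (n + 1)).group :=
  (stage n).embed n

abbrev UnionGroup : Type := SeqLimit stageEmbed

namespace UnionGroup

theorem of_stage_enum_eq (i : ℕ) {m N : ℕ} (hm : i.unpair.1 ≤ m) (hmN : m ≤ N) :
    SeqLimit.of stageEmbed N ((stage N).enum i) =
      SeqLimit.of stageEmbed m ((stage m).enum i) := by
  induction N, hmN using Nat.le_induction with
  | base => rfl
  | succ N hmN ih =>
    rw [← ih, ← SeqLimit.of_succ stageEmbed ((stage N).enum i)]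
    exact congrArg _ ((stage N).next_enum_of_ne N (i := i) (by omega))

theorem exists_index (z : UnionGroup) :
    ∃ i, ∀ N, i.unpair.1 ≤ N → SeqLimit.of stageEmbed N ((stage N).enum i) = z := by
  obtain ⟨n, x, rfl⟩ := SeqLimit.exists_of_eq stageEmbed z
  obtain ⟨c, rfl⟩ := exists_stage_enum_eq n x
  refine ⟨Nat.pair n c, fun N hN => ?_⟩
  rw [Nat.unpair_pair] at hN
  exact of_stage_enum_eq _ (by rw [Nat.unpair_pair]) hN

theorem isConj_of_ne_one {x y : UnionGroup} (hx : x ≠ 1) (hy : y ≠ 1) : IsConj x y := by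
  obtain ⟨i, hi⟩ := exists_index x
  obtain ⟨j, hj⟩ := exists_index y
  -- both indices are at most `N`, and the passage to stage `N + 1` treats the pair `(i, j)`
  set N := Nat.pair i j
  have hxN := hi N ((Nat.unpair_left_le i).trans (Nat.left_le_pair i j))
  have hyN := hj N ((Nat.unpair_left_le j).trans (Nat.right_le_pair i j))
  have h₁ : (stage N).enum i ≠ 1 := by rintro h; exact hx (by rw [← hxN, h, map_one])
  have h₂ : (stage N).enum j ≠ 1 := by rintro h; exact hy (by rw [← hyN, h, map_one])
  have hconj : IsConj (stageEmbed N ((stage N).enum i)) (stageEmbed N ((stage N).enum j)) := by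
    have := (stage N).isConj_embed N
    rw [Nat.unpair_pair] at this
    exact this h₁ h₂
  simpa only [SeqLimit.of_succ, hxN, hyN] using (SeqLimit.of stageEmbed (N + 1)).map_isConj hconj

end UnionGroup

/-- There exists a countable, infinite, torsion-free, simple group. -/
theorem stmt5 :
    ∃ (G : Type) (_ : Group G), Countable G ∧ Infinite G ∧
      Monoid.IsTorsionFree G ∧ IsSimpleGroup G := by
  have : Infinite UnionGroup :=
    Infinite.of_injective (β := Multiplicative ℤ) (SeqLimit.of stageEmbed 0)
      (SeqLimit.of_injective _ (fun n => (stage n).embed_injective n) 0)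
  refine ⟨UnionGroup, inferInstance, inferInstance, this, ?_, ?_⟩
  · exact SeqLimit.isTorsionFree _ (fun n => (stage n).embed_injective n)
      (fun n => (stage n).group.isTorsionFree)
  · exact isSimpleGroup_of_isConj fun _ _ => UnionGroup.isConj_of_ne_one
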